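/- For every σ > 0 and n ≥ 1, the polynomial G_n(x; σ²) = ∑_{k=0}^n (-1)^{n-k} binom(n,k) e^{σ²k(n-k)/2} x^k satisfies the semigroup property G_n(x; σ₁²) ⊠_n G_n(x; σ₂²) = G_n(x; σ₁² + σ₂²), where ⊠_n is the finite free multiplicative convolution defined on coefficients by (∑ aₖ' x^k) ⊠_n (∑ aₖ'' x^k) = ∑ (-1)^{n-k} (aₖ' aₖ'')/binom(n,k) x^k. -/
import Mathlib


open Polynomial Finset

/-- Finite free multiplicative convolution `⊠_n` of two polynomials of degree at
most `n`, defined on coefficients by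
`(∑ aₖ' x^k) ⊠_n (∑ aₖ'' x^k) = ∑ (-1)^{n-k} (aₖ' aₖ'')/binom(n,k) x^k`. -/
noncomputable def finFreeMul (n : ℕ) (P Q : Polynomial ℝ) : Polynomial ℝ :=
  ∑ k ∈ Finset.range (n + 1),
    Polynomial.C ((-1 : ℝ) ^ (n - k) * P.coeff k * Q.coeff k / (n.choose k : ℝ)) *
      Polynomial.X ^ k

/-- The free multiplicative Hermite polynomial `G_n(x;σ²)`. -/
noncomputable def freeMultHermite (n : ℕ) (s : ℝ) : Polynomial ℝ :=
  ∑ k ∈ Finset.range (n + 1),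
    Polynomial.C ((-1 : ℝ) ^ (n - k) * (n.choose k : ℝ) *
        Real.exp (s * k * (n - k : ℕ) / 2)) *
      Polynomial.X ^ k

lemma coeff_sum_range (n : ℕ) (c : ℕ → ℝ) (k : ℕ) (hk : k ∈ Finset.range (n+1)) :
    (∑ j ∈ Finset.range (n + 1), Polynomial.C (c j) * Polynomial.X ^ j).coeff k = c k := by
  rw [Polynomial.finset_sum_coeff]
  rw [Finset.sum_eq_single k]
  · simp
  · intro j _ hj
    simp [Polynomial.coeff_C_mul, Polynomial.coeff_X_pow, Ne.symm hj]
  · intro h; exact absurd hk h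

lemma fmh_coeff (n : ℕ) (s : ℝ) (k : ℕ) (hk : k ∈ Finset.range (n+1)) :
    (freeMultHermite n s).coeff k =
      (-1 : ℝ) ^ (n - k) * (n.choose k : ℝ) * Real.exp (s * k * (n - k : ℕ) / 2) :=
  coeff_sum_range n _ k hk

/-- Semigroup property of `G_n(x;σ²)` under finite free multiplicative convolution. -/
theorem stmt_15 (n : ℕ) (hn : 1 ≤ n) (s1 s2 : ℝ) (hs1 : 0 < s1) (hs2 : 0 < s2) :
    finFreeMul n (freeMultHermite n s1) (freeMultHermite n s2) =
      freeMultHermite n (s1 + s2) := by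
  unfold finFreeMul
  conv_rhs => unfold freeMultHermite
  apply Finset.sum_congr rfl
  intro k hk
  congr 1
  rw [fmh_coeff n s1 k hk, fmh_coeff n s2 k hk]
  have hkn : k ≤ n := Nat.lt_succ_iff.mp (Finset.mem_range.mp hk)
  have hch : (n.choose k : ℝ) ≠ 0 := Nat.cast_ne_zero.mpr (Nat.choose_pos hkn).ne'
  congr 1
  have h1 : ((-1:ℝ)) ^ (n-k) * ((-1:ℝ)) ^ (n-k) = 1 := by
    rw [← pow_add]; exact (neg_one_pow_eq_one_iff_even (by norm_num)).mpr (Even.add_self _)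
  rw [div_eq_iff hch,
    show (s1 + s2) * (k:ℝ) * ((n - k : ℕ):ℝ) / 2 =
      s1 * k * ((n-k:ℕ):ℝ) / 2 + s2 * k * ((n-k:ℕ):ℝ) / 2 from by ring, Real.exp_add]
  ring_nf
  congr 1
  rw [show (n-k)*3 = n-k + 2*(n-k) from by ring, pow_add, pow_mul]
  norm_num
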